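/- Let m ≥ 1 and let f be a nonzero multivariate polynomial in m complex variables. Then the set of points z on the unit sphere S of ℂ^m at which f vanishes has measure zero with respect to the surface measure on S. -/

import Mathlib

open MeasureTheory Metric

noncomputable instance (m : ℕ) : MeasurableSpace (EuclideanSpace ℂ (Fin m)) := borel _

instance (m : ℕ) : BorelSpace (EuclideanSpace ℂ (Fin m)) := ⟨rfl⟩

/-- The surface measure on the unit sphere of `ℂ^m` (identified with a Euclidean space of
real dimension `2m`), obtained from the Lebesgue (Haar) measure on `ℂ^m`. -/
noncomputable def sphereSurfaceMeasure (m : ℕ) :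
    Measure (sphere (0 : EuclideanSpace ℂ (Fin m)) 1) :=
  (volume : Measure (EuclideanSpace ℂ (Fin m))).toSphere

/-!
The surface measure of `s ⊆ S` is, up to a constant, the volume of the cone `(0, 1) • s`.
The polynomial `p(z) = f(z) f(-z)` is even, so only its homogeneous components `p_{2j}` of even
degree survive, and `G(x) = ∑_{j ≤ d} p_{2j}(x) ‖x‖^{2(d-j)}` is a polynomial in the real
coordinates of `x` with `G(r z) = r^{2d} p(z)` for `‖z‖ = 1`. Thus `G` vanishes on the cone over
the zero set of `f`, and `G ≠ 0` because the nonzero polynomial `p` cannot vanish on the whole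
sphere. The zero set of a nonzero real polynomial is Lebesgue-null, by induction on the number of
variables and Fubini.
-/

open MvPolynomial

theorem Finset.sum_range_two_mul {M : Type*} [AddCommMonoid M] (f : ℕ → M) (n : ℕ) :
    ∑ k ∈ range (2 * n), f k = ∑ j ∈ range n, (f (2 * j) + f (2 * j + 1)) := by
  induction n with
  | zero => simp
  | succ n ih => rw [Nat.mul_succ, sum_range_succ, sum_range_succ, ih, sum_range_succ, add_assoc]

namespace MvPolynomial

variable {σ R : Type*}

theorem IsHomogeneous.eval_smul [CommSemiring R] {p : MvPolynomial σ R} {k : ℕ}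
    (hp : p.IsHomogeneous k) (c : R) (x : σ → R) : eval (c • x) p = c ^ k * eval x p := by
  rw [eval_eq, eval_eq, Finset.mul_sum]
  refine Finset.sum_congr rfl fun d hd => ?_
  have hdeg : ∑ i ∈ d.support, d i = k := by
    rw [← hp (mem_support_iff.mp hd), Finsupp.weight_apply, Finsupp.sum]
    simp
  simp_rw [Pi.smul_apply, smul_eq_mul, mul_pow, Finset.prod_mul_distrib,
    Finset.prod_pow_eq_pow_sum, hdeg]
  ring

theorem sum_range_homogeneousComponent [CommSemiring R] (p : MvPolynomial σ R) {n : ℕ}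
    (hn : p.totalDegree < n) : ∑ k ∈ Finset.range n, homogeneousComponent k p = p := by
  have htop : ∑ k ∈ Finset.Ico (p.totalDegree + 1) n, homogeneousComponent k p = 0 :=
    Finset.sum_eq_zero fun k hk =>
      homogeneousComponent_eq_zero _ _ (by have := (Finset.mem_Ico.mp hk).1; omega)
  rw [← Finset.sum_range_add_sum_Ico _ hn, htop, add_zero, sum_homogeneousComponent]

theorem eval_add_eval_neg [CommRing R] (p : MvPolynomial σ R) {d : ℕ}
    (hd : p.totalDegree ≤ 2 * d) (x : σ → R) :
    eval x p + eval (-x) p =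
      2 * ∑ j ∈ Finset.range (d + 1), eval x (homogeneousComponent (2 * j) p) := by
  have hsum (y : σ → R) :
      eval y p = ∑ k ∈ Finset.range (2 * (d + 1)), eval y (homogeneousComponent k p) := by
    rw [← map_sum, sum_range_homogeneousComponent p (by omega)]
  have hneg (k : ℕ) : eval (-x) (homogeneousComponent k p) =
      (-1) ^ k * eval x (homogeneousComponent k p) := by
    rw [← neg_one_smul R x, (homogeneousComponent_isHomogeneous k p).eval_smul]
  rw [hsum, hsum, ← Finset.sum_add_distrib, Finset.sum_range_two_mul, Finset.mul_sum]
  refine Finset.sum_congr rfl fun j _ => ?_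
  simp only [hneg, pow_succ, pow_mul]
  ring

theorem eval_aeval_C_mul_X [CommSemiring R] (u : σ → R) (g : MvPolynomial σ R) (t : R) :
    (aeval (fun i => Polynomial.C (u i) * Polynomial.X) g).eval t = eval (t • u) g := by
  induction g using MvPolynomial.induction_on with
  | C a => simp
  | add p q hp hq => simp only [map_add, Polynomial.eval_add, hp, hq]
  | mul_X p i hp =>
    rw [map_mul, Polynomial.eval_mul, hp, map_mul]
    simp only [aeval_X, eval_X, Polynomial.eval_mul, Polynomial.eval_C, Polynomial.eval_X,
      Pi.smul_apply, smul_eq_mul]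
    ring

theorem eval_bind₁_neg_X [CommRing R] (x : σ → R) (f : MvPolynomial σ R) :
    eval x (bind₁ (fun i => -X i) f) = eval (-x) f := by
  change eval₂Hom (RingHom.id R) x (bind₁ _ f) = eval₂Hom (RingHom.id R) (-x) f
  rw [eval₂Hom_bind₁]
  congr
  funext i
  simp

theorem aeval_pi_apply [CommSemiring R] {E : Type*} (c : σ → E → R) (P : MvPolynomial σ R)
    (x : E) :
    aeval c P x = eval (fun i => c i x) P := by
  induction P using MvPolynomial.induction_on <;> simp_all

end MvPolynomial

theorem Polynomial.volume_setOf_eval_ofReal_eq_zero {p : Polynomial ℂ} (hp : p ≠ 0) :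
    volume {t : ℝ | p.eval (t : ℂ) = 0} = 0 :=
  ((Polynomial.finite_setOfPred_isRoot hp).preimage Complex.ofReal_injective.injOn).measure_zero _

theorem MvPolynomial.volume_setOf_eval_ofReal_eq_zero {n : ℕ} {P : MvPolynomial (Fin n) ℂ}
    (hP : P ≠ 0) : volume {x : Fin n → ℝ | eval (fun i => (x i : ℂ)) P = 0} = 0 := by
  induction n with
  | zero =>
    obtain ⟨c, rfl⟩ := C_surjective (Fin 0) P
    simp_all
  | succ n ih =>
    set Q := finSuccEquiv ℂ n P
    have hQ : Q ≠ 0 := (EmbeddingLike.map_ne_zero_iff).mpr hP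
    have hgeneric : ∀ᵐ y : Fin n → ℝ, eval (fun i => (y i : ℂ)) Q.leadingCoeff ≠ 0 :=
      measure_eq_zero_iff_ae_notMem.mp (ih (Polynomial.leadingCoeff_ne_zero.mpr hQ))
    set W : Set (ℝ × (Fin n → ℝ)) :=
      {q | eval (fun i => ((Fin.cons q.1 q.2 : Fin (n + 1) → ℝ) i : ℂ)) P = 0}
    have hW : MeasurableSet W := by
      refine (isClosed_eq ((continuous_eval P).comp (continuous_pi fun i => ?_))
        continuous_const).measurableSet
      exact Complex.continuous_ofReal.comp
        (i.cases continuous_fst fun j => (continuous_apply j).comp continuous_snd)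
    have hslice (y : Fin n → ℝ) : (fun t => (t, y)) ⁻¹' W =
        {t : ℝ | (Q.map (eval fun i => (y i : ℂ))).eval (t : ℂ) = 0} := by
      ext t
      change eval (Complex.ofReal ∘ Fin.cons t y) P = 0 ↔ _
      rw [Fin.comp_cons, eval_eq_eval_mv_eval']
      rfl
    have hW_preimage : {x : Fin (n + 1) → ℝ | eval (fun i => (x i : ℂ)) P = 0} =
        MeasurableEquiv.piFinSuccAbove (fun _ => ℝ) 0 ⁻¹' W := by
      ext x
      simp [W, MeasurableEquiv.piFinSuccAbove_apply, Fin.insertNthEquiv]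
    rw [hW_preimage, (volume_preserving_piFinSuccAbove (fun _ => ℝ) 0).measure_preimage
      hW.nullMeasurableSet, Measure.volume_eq_prod, Measure.prod_apply_symm hW]
    refine lintegral_eq_zero_of_ae_eq_zero ?_
    filter_upwards [hgeneric] with y hy
    rw [hslice]
    refine Polynomial.volume_setOf_eval_ofReal_eq_zero fun h => hy ?_
    rw [Polynomial.leadingCoeff, ← Polynomial.coeff_map, h, Polynomial.coeff_zero]

def realPolynomialFunctions (E : Type*) [AddCommGroup E] [Module ℝ E] : Subalgebra ℂ (E → ℂ) :=
  Algebra.adjoin ℂ (Set.range fun (ℓ : Module.Dual ℝ E) x => (ℓ x : ℂ))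

section RealPolynomialFunctions

variable {E : Type*}

theorem realPolynomialFunctions_le_range_aeval [AddCommGroup E] [Module ℝ E] {ι : Type*}
    [Fintype ι] (b : Module.Basis ι ℝ E) :
    realPolynomialFunctions E ≤ (aeval fun i x => (b.equivFun x i : ℂ)).range := by
  rw [← Algebra.adjoin_range_eq_range_aeval, realPolynomialFunctions, Algebra.adjoin_le_iff]
  rintro _ ⟨ℓ, rfl⟩
  have hℓ : (fun x => (ℓ x : ℂ)) = ∑ i, (ℓ (b i) : ℂ) • fun x => (b.equivFun x i : ℂ) := by
    ext x
    conv_lhs => rw [← b.sum_equivFun x]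
    simp only [map_sum, map_smul, smul_eq_mul, Complex.ofReal_sum, Complex.ofReal_mul,
      Finset.sum_apply, Pi.smul_apply, mul_comm]
  change (fun x => (ℓ x : ℂ)) ∈ _
  rw [hℓ]
  exact Subalgebra.sum_mem _ fun i _ =>
    Subalgebra.smul_mem _ (Algebra.subset_adjoin (Set.mem_range_self i)) _

theorem measure_setOf_eq_zero_of_mem_realPolynomialFunctions [NormedAddCommGroup E]
    [NormedSpace ℝ E] [FiniteDimensional ℝ E] [MeasurableSpace E] [BorelSpace E] (μ : Measure E)
    [μ.IsAddHaarMeasure] {g : E → ℂ} (hg : g ∈ realPolynomialFunctions E) (hg0 : g ≠ 0) :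
    μ {x | g x = 0} = 0 := by
  set b := Module.finBasis ℝ E
  obtain ⟨P, rfl⟩ := realPolynomialFunctions_le_range_aeval b hg
  have hP : P ≠ 0 := by rintro rfl; exact hg0 (map_zero _)
  have hzero : {x | aeval (fun i x => (b.equivFun x i : ℂ)) P x = 0} =
      b.equivFunL ⁻¹' {y | eval (fun i => (y i : ℂ)) P = 0} := by
    ext x
    simp [aeval_pi_apply]
  have hmap : μ.map b.equivFunL ≪ volume := Measure.absolutelyContinuous_isAddHaarMeasure _ _
  change μ {x | aeval (fun i x => (b.equivFun x i : ℂ)) P x = 0} = 0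
  rw [hzero]
  exact (MeasurableEquiv.map_apply b.equivFunL.toHomeomorph.toMeasurableEquiv _).symm.trans
    (hmap (volume_setOf_eval_ofReal_eq_zero hP))

theorem mem_realPolynomialFunctions_of_linear [AddCommGroup E] [Module ℂ E] [Module ℝ E]
    [IsScalarTower ℝ ℂ E] (ℓ : E →ₗ[ℂ] ℂ) : ⇑ℓ ∈ realPolynomialFunctions E := by
  have hℓ : ⇑ℓ = (fun x => ((Complex.reLm.comp (ℓ.restrictScalars ℝ)) x : ℂ)) +
      Complex.I • fun x => ((Complex.imLm.comp (ℓ.restrictScalars ℝ)) x : ℂ) := by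
    ext x
    simp only [LinearMap.coe_comp, Complex.reLm_coe, Complex.imLm_coe,
      LinearMap.coe_restrictScalars, Function.comp_apply, Pi.add_apply, Pi.smul_apply, smul_eq_mul]
    rw [mul_comm, Complex.re_add_im]
  rw [hℓ]
  exact add_mem (Algebra.subset_adjoin (Set.mem_range_self _))
    (Subalgebra.smul_mem _ (Algebra.subset_adjoin (Set.mem_range_self _)) _)

theorem norm_sq_mem_realPolynomialFunctions [NormedAddCommGroup E] [InnerProductSpace ℝ E]
    [FiniteDimensional ℝ E] : (fun x : E => ((‖x‖ ^ 2 : ℝ) : ℂ)) ∈ realPolynomialFunctions E := by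
  set b := stdOrthonormalBasis ℝ E
  have hnorm : (fun x : E => ((‖x‖ ^ 2 : ℝ) : ℂ)) =
      ∑ i, (fun x => ((innerₛₗ ℝ (b i) x : ℝ) : ℂ)) ^ 2 := by
    ext x
    rw [← real_inner_self_eq_norm_sq, ← b.sum_inner_mul_inner x x]
    simp [real_inner_comm x, sq]
  rw [hnorm]
  exact Subalgebra.sum_mem _ fun i _ => pow_mem (Algebra.subset_adjoin (Set.mem_range_self _)) _

theorem eval_mem_realPolynomialFunctions [AddCommGroup E] [Module ℝ E] {ι : Type*}
    {c : ι → E → ℂ} (hc : ∀ i, c i ∈ realPolynomialFunctions E) (P : MvPolynomial ι ℂ) :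
    (fun x => eval (fun i => c i x) P) ∈ realPolynomialFunctions E := by
  have hP : aeval c P ∈ Algebra.adjoin ℂ (Set.range c) := by
    rw [Algebra.adjoin_range_eq_range_aeval]
    exact ⟨P, rfl⟩
  convert Algebra.adjoin_le (Set.range_subset_iff.mpr hc) hP using 1
  ext x
  simp [aeval_pi_apply]

theorem toSphere_eq_zero_of_vanishing_on_rays [NormedAddCommGroup E] [NormedSpace ℝ E]
    [FiniteDimensional ℝ E] [MeasurableSpace E] [BorelSpace E] (μ : Measure E)
    [μ.IsAddHaarMeasure] {G : E → ℂ} (hG : G ∈ realPolynomialFunctions E) (hG0 : G ≠ 0)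
    {s : Set (sphere (0 : E) 1)} (hs : MeasurableSet s)
    (hvanish : ∀ z ∈ s, ∀ r : ℝ, G (r • (z : E)) = 0) : μ.toSphere s = 0 := by
  rw [Measure.toSphere_apply' μ hs,
    measure_mono_null ?_ (measure_setOf_eq_zero_of_mem_realPolynomialFunctions μ hG hG0),
    mul_zero]
  rintro _ ⟨r, -, _, ⟨z, hz, rfl⟩, rfl⟩
  exact hvanish z hz r

end RealPolynomialFunctions

section EuclideanSpace

variable {σ : Type*} [Fintype σ]

noncomputable def homogenizeEvenPart (p : MvPolynomial σ ℂ) (d : ℕ) (x : EuclideanSpace ℂ σ) :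
    ℂ :=
  ∑ j ∈ Finset.range (d + 1),
    eval x.ofLp (homogeneousComponent (2 * j) p) * ((‖x‖ ^ 2 : ℝ) : ℂ) ^ (d - j)

theorem homogenizeEvenPart_mem (p : MvPolynomial σ ℂ) (d : ℕ) :
    homogenizeEvenPart p d ∈ realPolynomialFunctions (EuclideanSpace ℂ σ) := by
  have hcoord (i : σ) : (fun x : EuclideanSpace ℂ σ => x i) ∈ realPolynomialFunctions _ :=
    mem_realPolynomialFunctions_of_linear (EuclideanSpace.proj i).toLinearMap
  have hsum : homogenizeEvenPart p d = ∑ j ∈ Finset.range (d + 1),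
      (fun x : EuclideanSpace ℂ σ => eval (fun i => x i) (homogeneousComponent (2 * j) p)) *
        (fun x => ((‖x‖ ^ 2 : ℝ) : ℂ)) ^ (d - j) := by
    ext x
    simp [homogenizeEvenPart]
  rw [hsum]
  exact Subalgebra.sum_mem _ fun j _ => mul_mem (eval_mem_realPolynomialFunctions hcoord _)
    (pow_mem norm_sq_mem_realPolynomialFunctions _)

theorem two_mul_homogenizeEvenPart_smul {p : MvPolynomial σ ℂ} {d : ℕ}
    (hd : p.totalDegree ≤ 2 * d) {z : EuclideanSpace ℂ σ} (hz : ‖z‖ = 1) (r : ℝ) :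
    2 * homogenizeEvenPart p d (r • z) =
      (r : ℂ) ^ (2 * d) * (eval z.ofLp p + eval (-z.ofLp) p) := by
  have hnorm : ((‖r • z‖ ^ 2 : ℝ) : ℂ) = (r : ℂ) ^ 2 := by
    rw [norm_smul, hz, mul_one, Real.norm_eq_abs, sq_abs, Complex.ofReal_pow]
  have hsmul : (r • z).ofLp = (r : ℂ) • z.ofLp := by
    rw [WithLp.ofLp_smul, Complex.coe_smul]
  rw [eval_add_eval_neg p hd, homogenizeEvenPart, Finset.mul_sum, Finset.mul_sum, Finset.mul_sum]
  refine Finset.sum_congr rfl fun j hj => ?_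
  have hj : j ≤ d := Nat.lt_succ_iff.mp (Finset.mem_range.mp hj)
  rw [hnorm, hsmul, (homogeneousComponent_isHomogeneous _ p).eval_smul, ← pow_mul,
    show 2 * d = 2 * j + 2 * (d - j) by omega, pow_add]
  ring

theorem exists_norm_eq_one_eval_ne_zero [Nonempty σ] {g : MvPolynomial σ ℂ} (hg : g ≠ 0) :
    ∃ z : EuclideanSpace ℂ σ, ‖z‖ = 1 ∧ eval z.ofLp g ≠ 0 := by
  obtain ⟨x, hx⟩ : ∃ x : EuclideanSpace ℂ σ, eval x.ofLp g ≠ 0 := by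
    by_contra! h
    exact hg (MvPolynomial.funext fun y => by simpa using h (WithLp.toLp 2 y))
  -- on the complex line through `x`, `g` is a nonzero polynomial, so it cannot vanish on the
  -- whole (infinite) unit circle of that line
  obtain ⟨u, hu, hxu⟩ : ∃ u : EuclideanSpace ℂ σ, ‖u‖ = 1 ∧ x = (‖x‖ : ℂ) • u := by
    rcases eq_or_ne x 0 with rfl | hx0
    · obtain ⟨u, hu⟩ := exists_norm_eq (EuclideanSpace ℂ σ) zero_le_one
      exact ⟨u, hu, by simp⟩
    · refine ⟨(‖x‖⁻¹ : ℂ) • x, norm_smul_inv_norm hx0, ?_⟩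
      rw [smul_smul, mul_inv_cancel₀ (by simpa using hx0), one_smul]
  set q : Polynomial ℂ := aeval (fun i => Polynomial.C (u i) * Polynomial.X) g
  have hq (t : ℂ) : q.eval t = eval (t • u).ofLp g := by
    rw [WithLp.ofLp_smul, eval_aeval_C_mul_X]
  have hq0 : q ≠ 0 := fun h => hx (by rw [hxu, ← hq, h, Polynomial.eval_zero])
  have hcircle : (sphere (0 : ℂ) 1).Infinite :=
    (isPreconnected_sphere (by simp [Complex.rank_real_complex]) 0 1).infinite_of_nontrivial
      ⟨1, by simp, -1, by simp, by norm_num⟩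
  obtain ⟨t, ht, hqt⟩ := (hcircle.sdiff (Polynomial.finite_setOfPred_isRoot hq0)).nonempty
  exact ⟨t • u, by simpa [norm_smul, hu] using ht, by simpa [hq] using hqt⟩

theorem exists_realPolynomialFunction_vanishing_on_rays [Nonempty σ] {f : MvPolynomial σ ℂ}
    (hf : f ≠ 0) :
    ∃ G ∈ realPolynomialFunctions (EuclideanSpace ℂ σ), G ≠ 0 ∧
      ∀ z : EuclideanSpace ℂ σ, ‖z‖ = 1 → eval z.ofLp f = 0 → ∀ r : ℝ, G (r • z) = 0 := by
  set fneg := bind₁ (fun i => -X i) f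
  have hfneg (y : σ → ℂ) : eval y fneg = eval (-y) f := eval_bind₁_neg_X y f
  have hfneg0 : fneg ≠ 0 := fun h =>
    hf (MvPolynomial.funext fun y => by simpa [hfneg, h] using (hfneg (-y)).symm)
  set p := f * fneg
  have hp (y : σ → ℂ) : eval y p + eval (-y) p = 2 * (eval y f * eval (-y) f) := by
    simp only [p, map_mul, hfneg, neg_neg]
    ring
  have hpG {z : EuclideanSpace ℂ σ} (hz : ‖z‖ = 1) (r : ℝ) :
      2 * homogenizeEvenPart p p.totalDegree (r • z) =
        (r : ℂ) ^ (2 * p.totalDegree) * (2 * (eval z.ofLp f * eval (-z.ofLp) f)) := by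
    rw [two_mul_homogenizeEvenPart_smul (by omega) hz, hp]
  refine ⟨_, homogenizeEvenPart_mem p p.totalDegree, fun h => ?_, fun z hz hfz r => ?_⟩
  · obtain ⟨z, hz, hpz⟩ := exists_norm_eq_one_eval_ne_zero (mul_ne_zero hf hfneg0)
    rw [map_mul, hfneg] at hpz
    have h1 := hpG hz 1
    rw [one_smul, h, Pi.zero_apply, mul_zero] at h1
    simp [hpz] at h1
  · simpa [hfz] using hpG hz r

end EuclideanSpace

/-- **The zero set of a nonzero polynomial is null on the sphere.**
Let `m ≥ 1` and let `f` be a nonzero polynomial in `m` complex variables.  Then the set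
of points of the unit sphere `S ⊆ ℂ^m` at which `f` vanishes has measure zero for the
surface measure on `S`. -/
theorem measure_zero_set_of_polynomial_on_sphere
    (m : ℕ) (hm : 1 ≤ m) (f : MvPolynomial (Fin m) ℂ) (hf : f ≠ 0) :
    sphereSurfaceMeasure m
      {z : sphere (0 : EuclideanSpace ℂ (Fin m)) 1 |
        MvPolynomial.eval (fun i => (z : EuclideanSpace ℂ (Fin m)) i) f = 0} = 0 := by
  have : Nonempty (Fin m) := ⟨⟨0, hm⟩⟩
  obtain ⟨G, hG, hG0, hvanish⟩ := exists_realPolynomialFunction_vanishing_on_rays hf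
  have hs : MeasurableSet {z : sphere (0 : EuclideanSpace ℂ (Fin m)) 1 |
      MvPolynomial.eval (fun i => (z : EuclideanSpace ℂ (Fin m)) i) f = 0} :=
    (isClosed_eq ((continuous_eval f).comp ((PiLp.continuous_ofLp 2 _).comp
      continuous_subtype_val)) continuous_const).measurableSet
  exact toSphere_eq_zero_of_vanishing_on_rays _ hG hG0 hs fun z hz =>
    hvanish z (mem_sphere_zero_iff_norm.mp z.2) hz
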